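/- Correctness of normalization for MLC: for every term Γ ⊢ t : A of MLC there exists a normal form n with Γ ⊢nf n : A such that Γ ⊢ t ≡ n : A in the equational theory of MLC (viewing the normal form as a term via the evident embedding). -/

import Mathlib

/-- Types of MLC: base, unit, products, functions and the modal type ◇. -/
inductive Ty : Type
  | base : Ty
  | unit : Ty
  | prod : Ty → Ty → Ty
  | arr : Ty → Ty → Ty
  | dia : Ty → Ty

/-- Typing contexts: lists of types (de Bruijn; the head is the most
recently bound variable). -/
abbrev Ctx := List Ty

/-- Raw terms of MLC with de Bruijn indices. -/
inductive Tm : Type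
  | var : ℕ → Tm
  | unit : Tm
  | pair : Tm → Tm → Tm
  | fst : Tm → Tm
  | snd : Tm → Tm
  | lam : Tm → Tm
  | app : Tm → Tm → Tm
  | ret : Tm → Tm                 -- return t
  | lett : Tm → Tm → Tm           -- let x = t in u

/-- Lifting of a renaming under a binder. -/
def liftRen (ρ : ℕ → ℕ) : ℕ → ℕ
  | 0 => 0
  | n + 1 => ρ n + 1

/-- Renaming of the variables of a term. -/
def rename (ρ : ℕ → ℕ) : Tm → Tm
  | .var n => .var (ρ n)
  | .unit => .unit
  | .pair t u => .pair (rename ρ t) (rename ρ u)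
  | .fst t => .fst (rename ρ t)
  | .snd t => .snd (rename ρ t)
  | .lam t => .lam (rename (liftRen ρ) t)
  | .app t u => .app (rename ρ t) (rename ρ u)
  | .ret t => .ret (rename ρ t)
  | .lett t u => .lett (rename ρ t) (rename (liftRen ρ) u)

/-- The typing judgment `Γ ⊢ t : A` of MLC. -/
inductive HasTy : Ctx → Tm → Ty → Prop
  | var {Γ : Ctx} {n : ℕ} {A : Ty} : Γ[n]? = some A → HasTy Γ (.var n) A
  | unit {Γ : Ctx} : HasTy Γ .unit .unit
  | pair {Γ t u A B} : HasTy Γ t A → HasTy Γ u B → HasTy Γ (.pair t u) (.prod A B)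
  | fst {Γ t A B} : HasTy Γ t (.prod A B) → HasTy Γ (.fst t) A
  | snd {Γ t A B} : HasTy Γ t (.prod A B) → HasTy Γ (.snd t) B
  | lam {Γ t A B} : HasTy (A :: Γ) t B → HasTy Γ (.lam t) (.arr A B)
  | app {Γ t u A B} : HasTy Γ t (.arr A B) → HasTy Γ u A → HasTy Γ (.app t u) B
  | ret {Γ t A} : HasTy Γ t A → HasTy Γ (.ret t) (.dia A)
  | lett {Γ t u A B} : HasTy Γ t (.dia A) → HasTy (A :: Γ) u (.dia B) →
      HasTy Γ (.lett t u) (.dia B)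

/-- Capture-avoiding substitution `subst k u t` of the term `u` for the
variable `k` in `t`. -/
def subst (k : ℕ) (u : Tm) : Tm → Tm
  | .var n => if n < k then .var n else if n = k then rename (· + k) u else .var (n - 1)
  | .unit => .unit
  | .pair t t' => .pair (subst k u t) (subst k u t')
  | .fst t => .fst (subst k u t)
  | .snd t => .snd (subst k u t)
  | .lam t => .lam (subst (k + 1) u t)
  | .app t t' => .app (subst k u t) (subst k u t')
  | .ret t => .ret (subst k u t)
  | .lett t t' => .lett (subst k u t) (subst (k + 1) u t')

/-- The equational theory `Γ ⊢ t ≡ u : A` of MLC: the congruence generated by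
⊤-η, ×-β, ×-η, →-β, →-η, ◇-β, ◇-η and ◇-associativity. -/
inductive EqTm : Ctx → Tm → Tm → Ty → Prop
  | refl {Γ t A} : HasTy Γ t A → EqTm Γ t t A
  | symm {Γ t u A} : EqTm Γ t u A → EqTm Γ u t A
  | trans {Γ t u v A} : EqTm Γ t u A → EqTm Γ u v A → EqTm Γ t v A
  | pair_congr {Γ t t' u u' A B} : EqTm Γ t t' A → EqTm Γ u u' B →
      EqTm Γ (.pair t u) (.pair t' u') (.prod A B)
  | fst_congr {Γ t t' A B} : EqTm Γ t t' (.prod A B) → EqTm Γ (.fst t) (.fst t') A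
  | snd_congr {Γ t t' A B} : EqTm Γ t t' (.prod A B) → EqTm Γ (.snd t) (.snd t') B
  | lam_congr {Γ t t' A B} : EqTm (A :: Γ) t t' B → EqTm Γ (.lam t) (.lam t') (.arr A B)
  | app_congr {Γ t t' u u' A B} : EqTm Γ t t' (.arr A B) → EqTm Γ u u' A →
      EqTm Γ (.app t u) (.app t' u') B
  | ret_congr {Γ t t' A} : EqTm Γ t t' A → EqTm Γ (.ret t) (.ret t') (.dia A)
  | lett_congr {Γ t t' u u' A B} : EqTm Γ t t' (.dia A) → EqTm (A :: Γ) u u' (.dia B) →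
      EqTm Γ (.lett t u) (.lett t' u') (.dia B)
  | unit_eta {Γ t} : HasTy Γ t .unit → EqTm Γ t .unit .unit
  | prod_beta1 {Γ t u A B} : HasTy Γ t A → HasTy Γ u B →
      EqTm Γ (.fst (.pair t u)) t A
  | prod_beta2 {Γ t u A B} : HasTy Γ t A → HasTy Γ u B →
      EqTm Γ (.snd (.pair t u)) u B
  | prod_eta {Γ t A B} : HasTy Γ t (.prod A B) →
      EqTm Γ t (.pair (.fst t) (.snd t)) (.prod A B)
  | arr_beta {Γ t u A B} : HasTy (A :: Γ) t B → HasTy Γ u A →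
      EqTm Γ (.app (.lam t) u) (subst 0 u t) B
  | arr_eta {Γ t A B} : HasTy Γ t (.arr A B) →
      EqTm Γ t (.lam (.app (rename Nat.succ t) (.var 0))) (.arr A B)
  | dia_beta {Γ t u A B} : HasTy Γ t A → HasTy (A :: Γ) u (.dia B) →
      EqTm Γ (.lett (.ret t) u) (subst 0 t u) (.dia B)
  | dia_eta {Γ t A} : HasTy Γ t (.dia A) →
      EqTm Γ t (.lett t (.ret (.var 0))) (.dia A)
  | dia_ass {Γ t u u' A B C} : HasTy Γ t (.dia A) → HasTy (A :: Γ) u (.dia B) →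
      HasTy (B :: Γ) u' (.dia C) →
      EqTm Γ (.lett (.lett t u) u')
        (.lett t (.lett u (rename (liftRen Nat.succ) u'))) (.dia C)

mutual
  /-- Neutral terms `Γ ⊢ne n : A` of MLC. -/
  inductive Neu : Ctx → Tm → Ty → Prop
    | var {Γ n A} : Γ[n]? = some A → Neu Γ (.var n) A
    | fst {Γ t A B} : Neu Γ t (.prod A B) → Neu Γ (.fst t) A
    | snd {Γ t A B} : Neu Γ t (.prod A B) → Neu Γ (.snd t) B
    | app {Γ t u A B} : Neu Γ t (.arr A B) → Nf Γ u A → Neu Γ (.app t u) B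

  /-- Normal forms `Γ ⊢nf n : A` of MLC. -/
  inductive Nf : Ctx → Tm → Ty → Prop
    | up {Γ t} : Neu Γ t .base → Nf Γ t .base
    | unit {Γ} : Nf Γ .unit .unit
    | pair {Γ t u A B} : Nf Γ t A → Nf Γ u B → Nf Γ (.pair t u) (.prod A B)
    | lam {Γ t A B} : Nf (A :: Γ) t B → Nf Γ (.lam t) (.arr A B)
    | ret {Γ t A} : Nf Γ t A → Nf Γ (.ret t) (.dia A)
    | lett {Γ t u A B} : Neu Γ t (.dia A) → Nf (A :: Γ) u (.dia B) →
        Nf Γ (.lett t u) (.dia B)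
end

/-!
Normalization by a Kripke logical predicate. `Reducible A Γ t` says that `t` is well typed and
behaves like a normal form in every context extending `Γ`; at `◇A` it asks `t` to be provably
equal to a *cover*: a tree of `let`s binding neutral terms, with `return`s of reducible terms at
its leaves. By induction on types, neutral terms are reducible (reflection; at `◇A` this is ◇-η)
and reducible terms are provably equal to normal forms (reification; the η-laws). Every
well-typed term under a reducible substitution is reducible; the one non-standard case is `let`,
where ◇-associativity pushes the continuation into the leaves of the cover and ◇-β fires there.
The theorem is this at the identity substitution, followed by reification.
-/

def consSubst (u : Tm) (σ : ℕ → Tm) : ℕ → Tm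
  | 0 => u
  | n + 1 => σ n

def liftSubst (σ : ℕ → Tm) : ℕ → Tm := consSubst (.var 0) (rename Nat.succ ∘ σ)

def psubst (σ : ℕ → Tm) : Tm → Tm
  | .var n => σ n
  | .unit => .unit
  | .pair t u => .pair (psubst σ t) (psubst σ u)
  | .fst t => .fst (psubst σ t)
  | .snd t => .snd (psubst σ t)
  | .lam t => .lam (psubst (liftSubst σ) t)
  | .app t u => .app (psubst σ t) (psubst σ u)
  | .ret t => .ret (psubst σ t)
  | .lett t u => .lett (psubst σ t) (psubst (liftSubst σ) u)

theorem liftRen_comp (ρ ρ' : ℕ → ℕ) : liftRen (ρ ∘ ρ') = liftRen ρ ∘ liftRen ρ' := by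
  funext n; cases n <;> rfl

theorem liftRen_comp_succ (ρ : ℕ → ℕ) : liftRen ρ ∘ Nat.succ = Nat.succ ∘ ρ := rfl

theorem liftRen_id : liftRen id = id := by
  funext n; cases n <;> rfl

theorem rename_rename (ρ ρ' : ℕ → ℕ) (t : Tm) :
    rename ρ (rename ρ' t) = rename (ρ ∘ ρ') t := by
  induction t generalizing ρ ρ' <;> simp [rename, liftRen_comp, *]

theorem rename_id (t : Tm) : rename id t = t := by
  induction t <;> simp [rename, liftRen_id, *]

theorem liftSubst_comp_liftRen (σ : ℕ → Tm) (ρ : ℕ → ℕ) :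
    liftSubst (σ ∘ ρ) = liftSubst σ ∘ liftRen ρ := by
  funext n; cases n <;> rfl

theorem psubst_rename (σ : ℕ → Tm) (ρ : ℕ → ℕ) (t : Tm) :
    psubst σ (rename ρ t) = psubst (σ ∘ ρ) t := by
  induction t generalizing σ ρ <;> simp [rename, psubst, liftSubst_comp_liftRen, *]

theorem rename_liftRen_comp_liftSubst (ρ : ℕ → ℕ) (σ : ℕ → Tm) :
    rename (liftRen ρ) ∘ liftSubst σ = liftSubst (rename ρ ∘ σ) := by
  funext n
  cases n with
  | zero => rfl
  | succ n => simp only [Function.comp_apply, liftSubst, consSubst, rename_rename]; rfl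

theorem rename_psubst (ρ : ℕ → ℕ) (σ : ℕ → Tm) (t : Tm) :
    rename ρ (psubst σ t) = psubst (rename ρ ∘ σ) t := by
  induction t generalizing σ ρ <;>
    simp [rename, psubst, rename_liftRen_comp_liftSubst, *]

theorem psubst_liftSubst_comp_liftSubst (σ σ' : ℕ → Tm) :
    psubst (liftSubst σ) ∘ liftSubst σ' = liftSubst (psubst σ ∘ σ') := by
  funext n
  cases n with
  | zero => rfl
  | succ n =>
    simp only [Function.comp_apply, liftSubst, consSubst, psubst_rename, rename_psubst]; rfl

theorem psubst_psubst (σ σ' : ℕ → Tm) (t : Tm) :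
    psubst σ (psubst σ' t) = psubst (psubst σ ∘ σ') t := by
  induction t generalizing σ σ' <;>
    simp [psubst, psubst_liftSubst_comp_liftSubst, *]

theorem liftSubst_var : liftSubst Tm.var = Tm.var := by
  funext n; cases n <;> rfl

theorem psubst_var (t : Tm) : psubst Tm.var t = t := by
  induction t <;> simp [psubst, liftSubst_var, *]

def substAt (k : ℕ) (u : Tm) (n : ℕ) : Tm :=
  if n < k then .var n else if n = k then rename (· + k) u else .var (n - 1)

theorem substAt_succ (k : ℕ) (u : Tm) : substAt (k + 1) u = liftSubst (substAt k u) := by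
  funext n
  cases n with
  | zero => simp [substAt, liftSubst, consSubst]
  | succ n =>
    simp only [substAt, liftSubst, consSubst, Function.comp_apply]
    rcases lt_trichotomy n k with h | rfl | h
    · simp [h, rename]
    · simp only [lt_irrefl, if_false, if_true, rename_rename]; rfl
    · simp only [rename, if_neg h.not_gt, if_neg h.ne', if_neg (by omega : ¬n + 1 < k + 1),
        if_neg (by omega : n + 1 ≠ k + 1)]
      congr 1; omega

theorem subst_eq_psubst (k : ℕ) (u t : Tm) : subst k u t = psubst (substAt k u) t := by
  induction t generalizing k <;> simp [subst, psubst, substAt_succ, substAt, *]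

theorem subst_zero_eq_psubst (u t : Tm) : subst 0 u t = psubst (consSubst u Tm.var) t := by
  rw [subst_eq_psubst]
  congr 1
  funext n
  cases n with
  | zero => exact rename_id u
  | succ n => rfl

theorem subst_zero_psubst_liftSubst (u : Tm) (σ : ℕ → Tm) (t : Tm) :
    subst 0 u (psubst (liftSubst σ) t) = psubst (consSubst u σ) t := by
  rw [subst_zero_eq_psubst, psubst_psubst]
  congr 1
  funext n
  cases n with
  | zero => rfl
  | succ n => exact (psubst_rename _ _ _).trans (psubst_var _)

theorem rename_subst_zero (ρ : ℕ → ℕ) (u t : Tm) :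
    rename ρ (subst 0 u t) = subst 0 (rename ρ u) (rename (liftRen ρ) t) := by
  rw [subst_zero_eq_psubst, subst_zero_eq_psubst, rename_psubst, psubst_rename]
  congr 1
  funext n
  cases n <;> rfl

def IsRen (ρ : ℕ → ℕ) (Γ Δ : Ctx) : Prop :=
  ∀ n A, Γ[n]? = some A → Δ[ρ n]? = some A

theorem IsRen.id (Γ : Ctx) : IsRen id Γ Γ := fun _ _ h => h

theorem IsRen.succ (Γ : Ctx) (A : Ty) : IsRen Nat.succ Γ (A :: Γ) := fun _ _ h => h

theorem IsRen.comp {ρ ρ' : ℕ → ℕ} {Γ Δ E : Ctx} (h : IsRen ρ Γ Δ) (h' : IsRen ρ' Δ E) :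
    IsRen (ρ' ∘ ρ) Γ E := fun n A hn => h' _ _ (h n A hn)

theorem IsRen.lift {ρ : ℕ → ℕ} {Γ Δ : Ctx} (h : IsRen ρ Γ Δ) (A : Ty) :
    IsRen (liftRen ρ) (A :: Γ) (A :: Δ)
  | 0, _, hn => hn
  | n + 1, B, hn => h n B hn

theorem HasTy.rename {Γ Δ : Ctx} {t : Tm} {A : Ty} {ρ : ℕ → ℕ} (h : HasTy Γ t A)
    (hρ : IsRen ρ Γ Δ) : HasTy Δ (rename ρ t) A := by
  induction h generalizing Δ ρ with
  | var hn => exact .var (hρ _ _ hn)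
  | unit => exact .unit
  | pair _ _ ih₁ ih₂ => exact .pair (ih₁ hρ) (ih₂ hρ)
  | fst _ ih => exact .fst (ih hρ)
  | snd _ ih => exact .snd (ih hρ)
  | lam _ ih => exact .lam (ih (hρ.lift _))
  | app _ _ ih₁ ih₂ => exact .app (ih₁ hρ) (ih₂ hρ)
  | ret _ ih => exact .ret (ih hρ)
  | lett _ _ ih₁ ih₂ => exact .lett (ih₁ hρ) (ih₂ (hρ.lift _))

def IsSubst (σ : ℕ → Tm) (Γ Δ : Ctx) : Prop :=
  ∀ n A, Γ[n]? = some A → HasTy Δ (σ n) A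

theorem IsSubst.cons {σ : ℕ → Tm} {Γ Δ : Ctx} {u : Tm} {A : Ty} (h : IsSubst σ Γ Δ)
    (hu : HasTy Δ u A) : IsSubst (consSubst u σ) (A :: Γ) Δ
  | 0, _, hn => by cases hn; exact hu
  | n + 1, B, hn => h n B hn

theorem IsSubst.lift {σ : ℕ → Tm} {Γ Δ : Ctx} (h : IsSubst σ Γ Δ) (A : Ty) :
    IsSubst (liftSubst σ) (A :: Γ) (A :: Δ) :=
  IsSubst.cons (fun n B hn => (h n B hn).rename (IsRen.succ Δ A)) (.var rfl)

theorem HasTy.psubst {Γ Δ : Ctx} {t : Tm} {A : Ty} {σ : ℕ → Tm} (h : HasTy Γ t A)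
    (hσ : IsSubst σ Γ Δ) : HasTy Δ (psubst σ t) A := by
  induction h generalizing Δ σ with
  | var hn => exact hσ _ _ hn
  | unit => exact .unit
  | pair _ _ ih₁ ih₂ => exact .pair (ih₁ hσ) (ih₂ hσ)
  | fst _ ih => exact .fst (ih hσ)
  | snd _ ih => exact .snd (ih hσ)
  | lam _ ih => exact .lam (ih (hσ.lift _))
  | app _ _ ih₁ ih₂ => exact .app (ih₁ hσ) (ih₂ hσ)
  | ret _ ih => exact .ret (ih hσ)
  | lett _ _ ih₁ ih₂ => exact .lett (ih₁ hσ) (ih₂ (hσ.lift _))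

theorem HasTy.subst_zero {Γ : Ctx} {t u : Tm} {A B : Ty} (ht : HasTy (A :: Γ) t B)
    (hu : HasTy Γ u A) : HasTy Γ (subst 0 u t) B := by
  rw [subst_zero_eq_psubst]
  exact ht.psubst (IsSubst.cons (fun _ _ hn => .var hn) hu)

theorem EqTm.hasTy {Γ : Ctx} {t u : Tm} {A : Ty} (h : EqTm Γ t u A) :
    HasTy Γ t A ∧ HasTy Γ u A := by
  induction h with
  | refl h => exact ⟨h, h⟩
  | symm _ ih => exact ih.symm
  | trans _ _ ih₁ ih₂ => exact ⟨ih₁.1, ih₂.2⟩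
  | pair_congr _ _ ih₁ ih₂ => exact ⟨.pair ih₁.1 ih₂.1, .pair ih₁.2 ih₂.2⟩
  | fst_congr _ ih => exact ⟨.fst ih.1, .fst ih.2⟩
  | snd_congr _ ih => exact ⟨.snd ih.1, .snd ih.2⟩
  | lam_congr _ ih => exact ⟨.lam ih.1, .lam ih.2⟩
  | app_congr _ _ ih₁ ih₂ => exact ⟨.app ih₁.1 ih₂.1, .app ih₁.2 ih₂.2⟩
  | ret_congr _ ih => exact ⟨.ret ih.1, .ret ih.2⟩
  | lett_congr _ _ ih₁ ih₂ => exact ⟨.lett ih₁.1 ih₂.1, .lett ih₁.2 ih₂.2⟩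
  | unit_eta h => exact ⟨h, .unit⟩
  | prod_beta1 h₁ h₂ => exact ⟨.fst (.pair h₁ h₂), h₁⟩
  | prod_beta2 h₁ h₂ => exact ⟨.snd (.pair h₁ h₂), h₂⟩
  | prod_eta h => exact ⟨h, .pair (.fst h) (.snd h)⟩
  | arr_beta h₁ h₂ => exact ⟨.app (.lam h₁) h₂, h₁.subst_zero h₂⟩
  | arr_eta h => exact ⟨h, .lam (.app (h.rename (IsRen.succ _ _)) (.var rfl))⟩
  | dia_beta h₁ h₂ => exact ⟨.lett (.ret h₁) h₂, h₂.subst_zero h₁⟩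
  | dia_eta h => exact ⟨h, .lett h (.ret (.var rfl))⟩
  | dia_ass h₁ h₂ h₃ =>
    exact ⟨.lett (.lett h₁ h₂) h₃, .lett h₁ (.lett h₂ (h₃.rename ((IsRen.succ _ _).lift _)))⟩

theorem EqTm.rename {Γ Δ : Ctx} {t u : Tm} {A : Ty} {ρ : ℕ → ℕ} (h : EqTm Γ t u A)
    (hρ : IsRen ρ Γ Δ) : EqTm Δ (rename ρ t) (rename ρ u) A := by
  induction h generalizing Δ ρ with
  | refl h => exact .refl (h.rename hρ)
  | symm _ ih => exact (ih hρ).symm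
  | trans _ _ ih₁ ih₂ => exact (ih₁ hρ).trans (ih₂ hρ)
  | pair_congr _ _ ih₁ ih₂ => exact .pair_congr (ih₁ hρ) (ih₂ hρ)
  | fst_congr _ ih => exact .fst_congr (ih hρ)
  | snd_congr _ ih => exact .snd_congr (ih hρ)
  | lam_congr _ ih => exact .lam_congr (ih (hρ.lift _))
  | app_congr _ _ ih₁ ih₂ => exact .app_congr (ih₁ hρ) (ih₂ hρ)
  | ret_congr _ ih => exact .ret_congr (ih hρ)
  | lett_congr _ _ ih₁ ih₂ => exact .lett_congr (ih₁ hρ) (ih₂ (hρ.lift _))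
  | unit_eta h => exact .unit_eta (h.rename hρ)
  | prod_beta1 h₁ h₂ => exact .prod_beta1 (h₁.rename hρ) (h₂.rename hρ)
  | prod_beta2 h₁ h₂ => exact .prod_beta2 (h₁.rename hρ) (h₂.rename hρ)
  | prod_eta h => exact .prod_eta (h.rename hρ)
  | arr_beta h₁ h₂ =>
    rw [_root_.rename, rename_subst_zero]
    exact .arr_beta (h₁.rename (hρ.lift _)) (h₂.rename hρ)
  | arr_eta h =>
    simpa only [_root_.rename, rename_rename, liftRen_comp_succ, liftRen] using
      EqTm.arr_eta (h.rename hρ)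
  | dia_beta h₁ h₂ =>
    rw [_root_.rename, _root_.rename, rename_subst_zero]
    exact .dia_beta (h₁.rename hρ) (h₂.rename (hρ.lift _))
  | dia_eta h => exact .dia_eta (h.rename hρ)
  | dia_ass h₁ h₂ h₃ =>
    simpa only [_root_.rename, rename_rename, ← liftRen_comp, liftRen_comp_succ] using
      EqTm.dia_ass (h₁.rename hρ) (h₂.rename (hρ.lift _)) (h₃.rename (hρ.lift _))

mutual
theorem Neu.hasTy {Γ : Ctx} {t : Tm} {A : Ty} : Neu Γ t A → HasTy Γ t A
  | .var h => .var h
  | .fst h => .fst h.hasTy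
  | .snd h => .snd h.hasTy
  | .app h h' => .app h.hasTy h'.hasTy

theorem Nf.hasTy {Γ : Ctx} {t : Tm} {A : Ty} : Nf Γ t A → HasTy Γ t A
  | .up h => h.hasTy
  | .unit => .unit
  | .pair h h' => .pair h.hasTy h'.hasTy
  | .lam h => .lam h.hasTy
  | .ret h => .ret h.hasTy
  | .lett h h' => .lett h.hasTy h'.hasTy
end

mutual
theorem Neu.rename {Γ Δ : Ctx} {t : Tm} {A : Ty} {ρ : ℕ → ℕ} (hρ : IsRen ρ Γ Δ) :
    Neu Γ t A → Neu Δ (rename ρ t) A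
  | .var h => .var (hρ _ _ h)
  | .fst h => .fst (h.rename hρ)
  | .snd h => .snd (h.rename hρ)
  | .app h h' => .app (h.rename hρ) (h'.rename hρ)

theorem Nf.rename {Γ Δ : Ctx} {t : Tm} {A : Ty} {ρ : ℕ → ℕ} (hρ : IsRen ρ Γ Δ) :
    Nf Γ t A → Nf Δ (rename ρ t) A
  | .up h => .up (h.rename hρ)
  | .unit => .unit
  | .pair h h' => .pair (h.rename hρ) (h'.rename hρ)
  | .lam h => .lam (h.rename (hρ.lift _))
  | .ret h => .ret (h.rename hρ)
  | .lett h h' => .lett (h.rename hρ) (h'.rename (hρ.lift _))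
end

inductive Cover (P : Ctx → Tm → Prop) : Ctx → Tm → Prop
  | ret {Γ : Ctx} {u : Tm} : P Γ u → Cover P Γ (.ret u)
  | lett {Γ : Ctx} {n u : Tm} {B : Ty} : Neu Γ n (.dia B) → Cover P (B :: Γ) u →
      Cover P Γ (.lett n u)

theorem Cover.rename {P : Ctx → Tm → Prop}
    (hP : ∀ {Γ Δ : Ctx} {ρ : ℕ → ℕ} {t : Tm}, IsRen ρ Γ Δ → P Γ t → P Δ (rename ρ t))
    {Γ Δ : Ctx} {v : Tm} {ρ : ℕ → ℕ} (h : Cover P Γ v) (hρ : IsRen ρ Γ Δ) :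
    Cover P Δ (rename ρ v) := by
  induction h generalizing Δ ρ with
  | ret hu => exact .ret (hP hρ hu)
  | lett hn _ ih => exact .lett (hn.rename hρ) (ih (hρ.lift _))

theorem Cover.hasTy {P : Ctx → Tm → Prop} {A : Ty}
    (hP : ∀ {Γ : Ctx} {t : Tm}, P Γ t → HasTy Γ t A) {Γ : Ctx} {v : Tm} (h : Cover P Γ v) :
    HasTy Γ v (.dia A) := by
  induction h with
  | ret hu => exact .ret (hP hu)
  | lett hn _ ih => exact .lett hn.hasTy ih

theorem Cover.exists_nf {P : Ctx → Tm → Prop} {A : Ty}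
    (hP : ∀ {Γ : Ctx} {t : Tm}, P Γ t → ∃ m, Nf Γ m A ∧ EqTm Γ t m A)
    {Γ : Ctx} {v : Tm} (h : Cover P Γ v) : ∃ m, Nf Γ m (.dia A) ∧ EqTm Γ v m (.dia A) := by
  induction h with
  | ret hu =>
    obtain ⟨m, hm, he⟩ := hP hu
    exact ⟨.ret m, .ret hm, .ret_congr he⟩
  | lett hn _ ih =>
    obtain ⟨m, hm, he⟩ := ih
    exact ⟨.lett _ m, .lett hn hm, .lett_congr (.refl hn.hasTy) he⟩

def Reducible : Ty → Ctx → Tm → Prop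
  | .base, Γ, t => ∃ n, Neu Γ n .base ∧ EqTm Γ t n .base
  | .unit, Γ, t => HasTy Γ t .unit
  | .prod A B, Γ, t => HasTy Γ t (.prod A B) ∧ Reducible A Γ (.fst t) ∧ Reducible B Γ (.snd t)
  | .arr A B, Γ, t => HasTy Γ t (.arr A B) ∧
      ∀ Δ ρ, IsRen ρ Γ Δ → ∀ u, Reducible A Δ u → Reducible B Δ (.app (rename ρ t) u)
  | .dia A, Γ, t => ∃ v, Cover (Reducible A) Γ v ∧ EqTm Γ t v (.dia A)

theorem Reducible.hasTy : ∀ {A : Ty} {Γ : Ctx} {t : Tm}, Reducible A Γ t → HasTy Γ t A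
  | .base, _, _, ⟨_, _, he⟩ => he.hasTy.1
  | .unit, _, _, h => h
  | .prod _ _, _, _, h => h.1
  | .arr _ _, _, _, h => h.1
  | .dia _, _, _, ⟨_, _, he⟩ => he.hasTy.1

theorem Reducible.of_eqTm : ∀ {A : Ty} {Γ : Ctx} {t t' : Tm},
    Reducible A Γ t → EqTm Γ t' t A → Reducible A Γ t'
  | .base, _, _, _, ⟨n, hn, he'⟩, he => ⟨n, hn, he.trans he'⟩
  | .unit, _, _, _, _, he => he.hasTy.1
  | .prod _ _, _, _, _, h, he =>
    ⟨he.hasTy.1, h.2.1.of_eqTm (.fst_congr he), h.2.2.of_eqTm (.snd_congr he)⟩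
  | .arr _ _, _, _, _, h, he => ⟨he.hasTy.1, fun Δ ρ hρ u hu =>
      (h.2 Δ ρ hρ u hu).of_eqTm (.app_congr (he.rename hρ) (.refl hu.hasTy))⟩
  | .dia _, _, _, _, ⟨v, hv, he'⟩, he => ⟨v, hv, he.trans he'⟩

theorem Reducible.rename {A : Ty} {Γ Δ : Ctx} {t : Tm} {ρ : ℕ → ℕ} (h : Reducible A Γ t)
    (hρ : IsRen ρ Γ Δ) : Reducible A Δ (rename ρ t) := by
  induction A generalizing Γ Δ t ρ with
  | base =>
    obtain ⟨n, hn, he⟩ := h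
    exact ⟨_, hn.rename hρ, he.rename hρ⟩
  | unit => exact HasTy.rename h hρ
  | prod A B ihA ihB => exact ⟨h.1.rename hρ, ihA h.2.1 hρ, ihB h.2.2 hρ⟩
  | arr A B =>
    refine ⟨h.1.rename hρ, fun E ρ' hρ' u hu => ?_⟩
    rw [rename_rename]
    exact h.2 E _ (hρ.comp hρ') u hu
  | dia A ihA =>
    obtain ⟨v, hv, he⟩ := h
    exact ⟨_, hv.rename (fun hρ' h' => ihA h' hρ') hρ, he.rename hρ⟩

theorem reflect_and_reify (A : Ty) :
    (∀ {Γ : Ctx} {n : Tm}, Neu Γ n A → Reducible A Γ n) ∧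
    (∀ {Γ : Ctx} {t : Tm}, Reducible A Γ t → ∃ m, Nf Γ m A ∧ EqTm Γ t m A) := by
  induction A with
  | base => exact ⟨fun hn => ⟨_, hn, .refl hn.hasTy⟩, fun ⟨n, hn, he⟩ => ⟨n, .up hn, he⟩⟩
  | unit => exact ⟨Neu.hasTy, fun h => ⟨.unit, .unit, .unit_eta h⟩⟩
  | prod A B ihA ihB =>
    refine ⟨fun hn => ⟨hn.hasTy, ihA.1 hn.fst, ihB.1 hn.snd⟩, fun ⟨ht, h₁, h₂⟩ => ?_⟩
    obtain ⟨m₁, hm₁, he₁⟩ := ihA.2 h₁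
    obtain ⟨m₂, hm₂, he₂⟩ := ihB.2 h₂
    exact ⟨.pair m₁ m₂, .pair hm₁ hm₂, (EqTm.prod_eta ht).trans (.pair_congr he₁ he₂)⟩
  | arr A B ihA ihB =>
    refine ⟨fun hn => ⟨hn.hasTy, fun Δ ρ hρ u hu => ?_⟩, fun ⟨ht, hf⟩ => ?_⟩
    · obtain ⟨m, hm, he⟩ := ihA.2 hu
      exact (ihB.1 ((hn.rename hρ).app hm)).of_eqTm
        (.app_congr (.refl (hn.hasTy.rename hρ)) he)
    · obtain ⟨m, hm, he⟩ := ihB.2 (hf _ _ (IsRen.succ _ A) _ (ihA.1 (.var (n := 0) rfl)))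
      exact ⟨.lam m, .lam hm, (EqTm.arr_eta ht).trans (.lam_congr he)⟩
  | dia A ihA =>
    refine ⟨fun hn => ⟨_, .lett hn (.ret (ihA.1 (.var (n := 0) rfl))), .dia_eta hn.hasTy⟩,
      fun ⟨v, hv, he⟩ => ?_⟩
    obtain ⟨m, hm, he'⟩ := hv.exists_nf ihA.2
    exact ⟨m, hm, he.trans he'⟩

theorem Neu.reducible {Γ : Ctx} {n : Tm} {A : Ty} (h : Neu Γ n A) : Reducible A Γ n :=
  (reflect_and_reify A).1 h

theorem Reducible.exists_nf {Γ : Ctx} {t : Tm} {A : Ty} (h : Reducible A Γ t) :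
    ∃ m, Nf Γ m A ∧ EqTm Γ t m A :=
  (reflect_and_reify A).2 h

def ReducibleSubst (σ : ℕ → Tm) (Γ Δ : Ctx) : Prop :=
  ∀ n A, Γ[n]? = some A → Reducible A Δ (σ n)

theorem ReducibleSubst.isSubst {σ : ℕ → Tm} {Γ Δ : Ctx} (h : ReducibleSubst σ Γ Δ) :
    IsSubst σ Γ Δ :=
  fun n A hn => (h n A hn).hasTy

theorem ReducibleSubst.rename {σ : ℕ → Tm} {Γ Δ E : Ctx} {ρ : ℕ → ℕ}
    (h : ReducibleSubst σ Γ Δ) (hρ : IsRen ρ Δ E) : ReducibleSubst (rename ρ ∘ σ) Γ E :=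
  fun n A hn => (h n A hn).rename hρ

theorem ReducibleSubst.cons {σ : ℕ → Tm} {Γ Δ : Ctx} {u : Tm} {A : Ty}
    (h : ReducibleSubst σ Γ Δ) (hu : Reducible A Δ u) : ReducibleSubst (consSubst u σ) (A :: Γ) Δ
  | 0, _, hn => by cases hn; exact hu
  | n + 1, B, hn => h n B hn

theorem Cover.reducible_lett {Γ : Ctx} {u : Tm} {A B : Ty} (hu : HasTy (A :: Γ) u (.dia B))
    (ihu : ∀ {Δ : Ctx} {σ : ℕ → Tm}, ReducibleSubst σ (A :: Γ) Δ →
      Reducible (.dia B) Δ (psubst σ u))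
    {Δ : Ctx} {v : Tm} {σ : ℕ → Tm} (hv : Cover (Reducible A) Δ v) (hσ : ReducibleSubst σ Γ Δ) :
    Reducible (.dia B) Δ (.lett v (psubst (liftSubst σ) u)) := by
  induction hv generalizing σ with
  | ret hw =>
    have hβ := EqTm.dia_beta hw.hasTy (hu.psubst (hσ.isSubst.lift A))
    rw [subst_zero_psubst_liftSubst] at hβ
    exact (ihu (hσ.cons hw)).of_eqTm hβ
  | @lett Δ n v' C hn hv' ih =>
    obtain ⟨w, hw, he⟩ := ih (hσ.rename (IsRen.succ Δ C))
    rw [← rename_liftRen_comp_liftSubst, ← rename_psubst] at he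
    have hα := EqTm.dia_ass hn.hasTy (hv'.hasTy Reducible.hasTy) (hu.psubst (hσ.isSubst.lift A))
    exact ⟨.lett n w, .lett hn hw, hα.trans (.lett_congr (.refl hn.hasTy) he)⟩

theorem HasTy.reducible_psubst {Γ : Ctx} {t : Tm} {A : Ty} (h : HasTy Γ t A) {Δ : Ctx}
    {σ : ℕ → Tm} (hσ : ReducibleSubst σ Γ Δ) : Reducible A Δ (_root_.psubst σ t) := by
  induction h generalizing Δ σ with
  | var hn => exact hσ _ _ hn
  | unit => exact .unit
  | pair _ _ ih₁ ih₂ =>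
    have h₁ := ih₁ hσ
    have h₂ := ih₂ hσ
    exact ⟨.pair h₁.hasTy h₂.hasTy, h₁.of_eqTm (.prod_beta1 h₁.hasTy h₂.hasTy),
      h₂.of_eqTm (.prod_beta2 h₁.hasTy h₂.hasTy)⟩
  | fst _ ih => exact (ih hσ).2.1
  | snd _ ih => exact (ih hσ).2.2
  | @lam Γ t A B h ih =>
    refine ⟨.lam (h.psubst (hσ.isSubst.lift A)), fun E ρ hρ u hu => ?_⟩
    have hσρ := hσ.rename hρ
    have hβ := EqTm.arr_beta (h.psubst (hσρ.isSubst.lift A)) hu.hasTy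
    rw [subst_zero_psubst_liftSubst] at hβ
    rw [_root_.psubst, _root_.rename, rename_psubst, rename_liftRen_comp_liftSubst]
    exact (ih (hσρ.cons hu)).of_eqTm hβ
  | app _ _ ih₁ ih₂ =>
    simpa only [_root_.psubst, rename_id] using (ih₁ hσ).2 Δ id (IsRen.id Δ) _ (ih₂ hσ)
  | ret _ ih =>
    have hr := ih hσ
    exact ⟨_, .ret hr, .refl (.ret hr.hasTy)⟩
  | lett _ hu ih₁ ih₂ =>
    obtain ⟨v, hv, he⟩ := ih₁ hσ
    exact (hv.reducible_lett hu ih₂ hσ).of_eqTm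
      (.lett_congr he (.refl (hu.psubst (hσ.isSubst.lift _))))

/-- correctness of normalization for MLC: every well-typed term
`Γ ⊢ t : A` has a normal form `Γ ⊢nf n : A` with `Γ ⊢ t ≡ n : A`. -/
theorem normalization_correct_MLC {Γ : Ctx} {t : Tm} {A : Ty}
    (ht : HasTy Γ t A) : ∃ n : Tm, Nf Γ n A ∧ EqTm Γ t n A := by
  have hid : ReducibleSubst Tm.var Γ Γ := fun _ _ hn => (Neu.var hn).reducible
  simpa only [psubst_var] using (ht.reducible_psubst hid).exists_nf
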